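/- arXiv:0908.0506 — 2 statements merged into one kernel-verified Lean document; each statement's English description precedes it below -/
import Mathlib

section
/- Let r* minimize ||J* − Φr||_∞ over r ∈ ℝ^K and define U_SALP(θ) = ||J* − Φr*||_∞ + ℓ(r*,θ) + 2θ/(1−α). Then U_SALP(0) ≤ (2/(1−α)) ||J* − Φr*||_∞. -/
open Finset Matrix

noncomputable section

/-- The Bellman operator. -/
def bellmanT {X A : Type*} [Fintype X] [Fintype A] [Nonempty A]
    (g : X → A → ℝ) (P : A → X → X → ℝ) (α : ℝ) (J : X → ℝ) : X → ℝ :=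
  fun x => Finset.univ.inf' Finset.univ_nonempty fun a => g x a + α * ∑ x', P a x x' * J x'

/-- The Bellman operator of a stationary policy. -/
def polT {X A : Type*} [Fintype X]
    (g : X → A → ℝ) (P : A → X → X → ℝ) (α : ℝ) (μ : X → A) (J : X → ℝ) : X → ℝ :=
  fun x => g x (μ x) + α * ∑ x', P (μ x) x x' * J x'

/-- Transition matrix of a stationary policy. -/
def polMat {X A : Type*} (P : A → X → X → ℝ) (μ : X → A) : Matrix X X ℝ :=
  Matrix.of fun x x' => P (μ x) x x'

/-- Δ_μ = Σ_k (α P_μ)^k = (I - α P_μ)⁻¹. -/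
def deltaMat {X A : Type*} [Fintype X] [DecidableEq X]
    (P : A → X → X → ℝ) (α : ℝ) (μ : X → A) : Matrix X X ℝ :=
  ∑' k : ℕ, (α • polMat P μ) ^ k

/-- π_{μ,ν} = (1-α) ν^⊤ (I - α P_μ)⁻¹. -/
def piDist {X A : Type*} [Fintype X] [DecidableEq X]
    (P : A → X → X → ℝ) (α : ℝ) (μ : X → A) (ν : X → ℝ) : X → ℝ :=
  fun x => (1 - α) * ∑ x0, ν x0 * deltaMat P α μ x0 x

/-- Cost-to-go of policy μ: Σ_t α^t P_μ^t g_μ. -/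
def Jpol {X A : Type*} [Fintype X] [DecidableEq X]
    (g : X → A → ℝ) (P : A → X → X → ℝ) (α : ℝ) (μ : X → A) : X → ℝ :=
  fun x => ∑' t : ℕ, α ^ t * (((polMat P μ) ^ t) *ᵥ (fun y => g y (μ y))) x

/-- Linear combination of basis functions. -/
def phiR {X : Type*} {K : ℕ} (Φ : X → Fin K → ℝ) (r : Fin K → ℝ) : X → ℝ :=
  fun x => ∑ i, Φ x i * r i

/-- ν-weighted 1-norm. -/
def wnorm1 {X : Type*} [Fintype X] (ν J : X → ℝ) : ℝ := ∑ x, ν x * |J x|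

/-- Max norm. -/
def supNorm {X : Type*} [Fintype X] [Nonempty X] (J : X → ℝ) : ℝ :=
  Finset.univ.sup' Finset.univ_nonempty fun x => |J x|

/-- ψ-weighted max norm ‖J‖_{∞,1/ψ}. -/
def wsupNorm {X : Type*} [Fintype X] [Nonempty X] (ψ J : X → ℝ) : ℝ :=
  Finset.univ.sup' Finset.univ_nonempty fun x => |J x| / ψ x

/-- β(ψ) = max_{x,a} (Σ_{x'} P_a(x,x') ψ(x')) / ψ(x). -/
def betaPsi {X A : Type*} [Fintype X] [Nonempty X] [Fintype A] [Nonempty A]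
    (P : A → X → X → ℝ) (ψ : X → ℝ) : ℝ :=
  Finset.univ.sup' Finset.univ_nonempty fun p : X × A => (∑ x', P p.2 p.1 x' * ψ x') / ψ p.1

/-- Feasible values of the LP defining ℓ(r,θ). -/
def ellSet {X A : Type*} [Fintype X] [Fintype A] [Nonempty A] {K : ℕ}
    (g : X → A → ℝ) (P : A → X → X → ℝ) (α : ℝ) (π : X → ℝ)
    (Φ : X → Fin K → ℝ) (r : Fin K → ℝ) (θ : ℝ) : Set ℝ :=
  {v | ∃ (s : X → ℝ) (γ : ℝ), v = γ / (1 - α) ∧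
    (∀ x, phiR Φ r x - bellmanT g P α (phiR Φ r) x ≤ s x + γ) ∧
    (∑ x, π x * s x ≤ θ) ∧ (∀ x, 0 ≤ s x)}

/-- ℓ(r,θ): optimal value of the LP (3.2). -/
def ellVal {X A : Type*} [Fintype X] [Fintype A] [Nonempty A] {K : ℕ}
    (g : X → A → ℝ) (P : A → X → X → ℝ) (α : ℝ) (π : X → ℝ)
    (Φ : X → Fin K → ℝ) (r : Fin K → ℝ) (θ : ℝ) : ℝ :=
  sInf (ellSet g P α π Φ r θ)

/-! Since `J* = T J*` and `T` is an `α`-contraction in the sup norm, the Bellman residual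
`Φr* - TΦr*` is at most `(1 + α) ‖J* - Φr*‖_∞`, so `s = 0`, `γ = (1 + α) ‖J* - Φr*‖_∞` is
feasible for the LP defining `ℓ(r*, 0)`. Hence `ℓ(r*, 0) ≤ (1 + α) / (1 - α) ‖J* - Φr*‖_∞`, and
adding `‖J* - Φr*‖_∞` gives the bound. The LP value is a genuine infimum, not a junk `sInf`:
`π_{μ*,ν} ≥ (1 - α) ν` has a positive entry, at which any feasible `s` is at most `θ / π`, and
this bounds `γ` from below. -/

section NeumannSeries

variable {n : Type*} [Fintype n] [DecidableEq n] {M : Matrix n n ℝ} {α : ℝ}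

lemma smul_pow_apply_nonneg (hM : M ∈ rowStochastic ℝ n) (hα0 : 0 ≤ α) (k : ℕ) (x y : n) :
    0 ≤ ((α • M) ^ k) x y := by
  rw [smul_pow, Matrix.smul_apply, smul_eq_mul]
  exact mul_nonneg (pow_nonneg hα0 k) (nonneg_of_mem_rowStochastic (pow_mem hM k))

lemma summable_smul_pow_apply (hM : M ∈ rowStochastic ℝ n) (hα0 : 0 ≤ α) (hα1 : α < 1)
    (x y : n) : Summable fun k : ℕ => ((α • M) ^ k) x y := by
  refine .of_nonneg_of_le (smul_pow_apply_nonneg hM hα0 · x y) (fun k => ?_)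
    (summable_geometric_of_lt_one hα0 hα1)
  rw [smul_pow, Matrix.smul_apply, smul_eq_mul]
  exact mul_le_of_le_one_right (pow_nonneg hα0 k) (le_one_of_mem_rowStochastic (pow_mem hM k))

lemma tsum_smul_pow_apply (hM : M ∈ rowStochastic ℝ n) (hα0 : 0 ≤ α) (hα1 : α < 1)
    (x y : n) : (∑' k : ℕ, (α • M) ^ k) x y = ∑' k : ℕ, ((α • M) ^ k) x y := by
  have hs : Summable fun k : ℕ => (α • M) ^ k :=
    Pi.summable.mpr fun x => Pi.summable.mpr (summable_smul_pow_apply hM hα0 hα1 x)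
  exact (Pi.hasSum.mp (Pi.hasSum.mp hs.hasSum x) y).tsum_eq.symm

lemma tsum_smul_pow_apply_nonneg (hM : M ∈ rowStochastic ℝ n) (hα0 : 0 ≤ α) (hα1 : α < 1)
    (x y : n) : 0 ≤ (∑' k : ℕ, (α • M) ^ k) x y := by
  rw [tsum_smul_pow_apply hM hα0 hα1]
  exact tsum_nonneg (smul_pow_apply_nonneg hM hα0 · x y)

lemma one_apply_le_tsum_smul_pow_apply (hM : M ∈ rowStochastic ℝ n) (hα0 : 0 ≤ α)
    (hα1 : α < 1) (x y : n) : (1 : Matrix n n ℝ) x y ≤ (∑' k : ℕ, (α • M) ^ k) x y := by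
  rw [tsum_smul_pow_apply hM hα0 hα1]
  simpa using (summable_smul_pow_apply hM hα0 hα1 x y).le_tsum 0
    (fun k _ => smul_pow_apply_nonneg hM hα0 k x y)

end NeumannSeries

section Policy

variable {X A : Type*} [Fintype X] [DecidableEq X] {P : A → X → X → ℝ} {α : ℝ}

lemma polMat_mem_rowStochastic (hP0 : ∀ a x x', 0 ≤ P a x x')
    (hP1 : ∀ a x, ∑ x', P a x x' = 1) (μ : X → A) : polMat P μ ∈ rowStochastic ℝ X :=
  mem_rowStochastic_iff_sum.mpr ⟨fun x _ => hP0 _ x _, fun x => hP1 (μ x) x⟩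

variable {μ : X → A} {ν : X → ℝ}

lemma piDist_nonneg (hP : polMat P μ ∈ rowStochastic ℝ X) (hα0 : 0 ≤ α) (hα1 : α < 1)
    (hν0 : ∀ x, 0 ≤ ν x) (x : X) : 0 ≤ piDist P α μ ν x :=
  mul_nonneg (by linarith) (Finset.sum_nonneg fun x0 _ =>
    mul_nonneg (hν0 x0) (tsum_smul_pow_apply_nonneg hP hα0 hα1 x0 x))

lemma mul_le_piDist (hP : polMat P μ ∈ rowStochastic ℝ X) (hα0 : 0 ≤ α) (hα1 : α < 1)
    (hν0 : ∀ x, 0 ≤ ν x) (x : X) : (1 - α) * ν x ≤ piDist P α μ ν x := by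
  refine mul_le_mul_of_nonneg_left ?_ (by linarith)
  calc ν x = ν x * (1 : Matrix X X ℝ) x x := by simp
    _ ≤ ν x * deltaMat P α μ x x :=
      mul_le_mul_of_nonneg_left (one_apply_le_tsum_smul_pow_apply hP hα0 hα1 x x) (hν0 x)
    _ ≤ ∑ x0, ν x0 * deltaMat P α μ x0 x :=
      Finset.single_le_sum (fun x0 _ => mul_nonneg (hν0 x0)
        (tsum_smul_pow_apply_nonneg hP hα0 hα1 x0 x)) (Finset.mem_univ x)

lemma exists_piDist_pos (hP : polMat P μ ∈ rowStochastic ℝ X) (hα0 : 0 ≤ α) (hα1 : α < 1)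
    (hν0 : ∀ x, 0 ≤ ν x) (hν1 : ∑ x, ν x = 1) : ∃ x, 0 < piDist P α μ ν x := by
  obtain ⟨x, -, hx⟩ := Finset.exists_lt_of_sum_lt (f := fun _ => (0 : ℝ)) (g := ν)
    (s := Finset.univ) (by simp [hν1])
  exact ⟨x, (mul_pos (by linarith) hx).trans_le (mul_le_piDist hP hα0 hα1 hν0 x)⟩

end Policy

section Bellman

variable {X A : Type*} [Fintype X] [Fintype A] [Nonempty A]
  {g : X → A → ℝ} {P : A → X → X → ℝ} {α : ℝ}

lemma bellmanT_le_add_of_sub_le (hα0 : 0 ≤ α) (hP0 : ∀ a x x', 0 ≤ P a x x')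
    (hP1 : ∀ a x, ∑ x', P a x x' = 1) {J J' : X → ℝ} {c : ℝ} (h : ∀ y, J y - J' y ≤ c)
    (x : X) : bellmanT g P α J x ≤ bellmanT g P α J' x + α * c := by
  obtain ⟨a, -, ha⟩ := Finset.exists_mem_eq_inf' Finset.univ_nonempty
    fun a => g x a + α * ∑ x', P a x x' * J' x'
  have hexp : ∑ x', P a x x' * J x' ≤ ∑ x', P a x x' * J' x' + c :=
    calc ∑ x', P a x x' * J x' ≤ ∑ x', (P a x x' * J' x' + P a x x' * c) :=
          Finset.sum_le_sum fun y _ => by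
            rw [← mul_add]; exact mul_le_mul_of_nonneg_left (by linarith [h y]) (hP0 a x y)
      _ = ∑ x', P a x x' * J' x' + c := by
          rw [Finset.sum_add_distrib, ← Finset.sum_mul, hP1, one_mul]
  calc bellmanT g P α J x ≤ g x a + α * ∑ x', P a x x' * J x' :=
        Finset.inf'_le _ (Finset.mem_univ a)
    _ ≤ g x a + α * ∑ x', P a x x' * J' x' + α * c := by
        linarith [mul_le_mul_of_nonneg_left hexp hα0]
    _ = bellmanT g P α J' x + α * c := by rw [bellmanT, ha]

lemma abs_apply_le_supNorm [Nonempty X] (J : X → ℝ) (x : X) : |J x| ≤ supNorm J :=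
  Finset.le_sup' (fun x => |J x|) (Finset.mem_univ x)

lemma sub_bellmanT_le [Nonempty X] (hα0 : 0 ≤ α) (hP0 : ∀ a x x', 0 ≤ P a x x')
    (hP1 : ∀ a x, ∑ x', P a x x' = 1) {Jstar : X → ℝ} (hJstar : bellmanT g P α Jstar = Jstar)
    (J : X → ℝ) (x : X) :
    J x - bellmanT g P α J x ≤ (1 + α) * supNorm (fun y => Jstar y - J y) := by
  have hdist := fun y => abs_le.mp (abs_apply_le_supNorm (fun y => Jstar y - J y) y)
  have hT := bellmanT_le_add_of_sub_le (g := g) hα0 hP0 hP1 (fun y => (hdist y).2) x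
  rw [hJstar] at hT
  linarith [(hdist x).1]

end Bellman

section LP

variable {X A : Type*} [Fintype X] [Fintype A] [Nonempty A] {K : ℕ}
  {g : X → A → ℝ} {P : A → X → X → ℝ} {α : ℝ} {π : X → ℝ} {Φ : X → Fin K → ℝ}
  {r : Fin K → ℝ} {θ : ℝ}

lemma bddBelow_ellSet (hα1 : α < 1) (hπ0 : ∀ x, 0 ≤ π x) {x₀ : X} (hx₀ : 0 < π x₀) :
    BddBelow (ellSet g P α π Φ r θ) := by
  refine ⟨(phiR Φ r x₀ - bellmanT g P α (phiR Φ r) x₀ - θ / π x₀) / (1 - α), ?_⟩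
  rintro _ ⟨s, γ, rfl, hres, hθ, hs0⟩
  have hs : π x₀ * s x₀ ≤ θ :=
    (Finset.single_le_sum (fun x _ => mul_nonneg (hπ0 x) (hs0 x)) (Finset.mem_univ x₀)).trans hθ
  have hs' : s x₀ ≤ θ / π x₀ := by rw [le_div_iff₀ hx₀]; linarith
  exact div_le_div_of_nonneg_right (by linarith [hres x₀]) (by linarith)

lemma ellVal_le_of_sub_bellmanT_le (hα1 : α < 1) (hπ0 : ∀ x, 0 ≤ π x) {x₀ : X}
    (hx₀ : 0 < π x₀) (hθ : 0 ≤ θ) {γ : ℝ}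
    (hγ : ∀ x, phiR Φ r x - bellmanT g P α (phiR Φ r) x ≤ γ) :
    ellVal g P α π Φ r θ ≤ γ / (1 - α) :=
  csInf_le (bddBelow_ellSet hα1 hπ0 hx₀)
    ⟨fun _ => 0, γ, rfl, by simpa using hγ, by simpa using hθ, fun _ => le_rfl⟩

end LP

theorem U_SALP_at_zero_bound_general
    {X A : Type*} [Fintype X] [Nonempty X] [Fintype A] [Nonempty A] [DecidableEq X] {K : ℕ}
    (g : X → A → ℝ) (P : A → X → X → ℝ) (α : ℝ)
    (hα0 : 0 < α) (hα1 : α < 1)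
    (hP0 : ∀ a x x', 0 ≤ P a x x') (hP1 : ∀ a x, ∑ x', P a x x' = 1)
    (Jstar : X → ℝ) (hJstar : bellmanT g P α Jstar = Jstar)
    (μs : X → A)
    (ν : X → ℝ) (hν0 : ∀ x, 0 ≤ ν x) (hν1 : ∑ x, ν x = 1)
    (Φ : X → Fin K → ℝ)
    (rstar : Fin K → ℝ)
    (U : ℝ → ℝ)
    (hU : ∀ θ, U θ = supNorm (fun x => Jstar x - phiR Φ rstar x) +
      ellVal g P α (piDist P α μs ν) Φ rstar θ + 2 * θ / (1 - α)) :
    U 0 ≤ (2 / (1 - α)) * supNorm (fun x => Jstar x - phiR Φ rstar x) := by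
  set ε := supNorm (fun x => Jstar x - phiR Φ rstar x)
  have hP := polMat_mem_rowStochastic hP0 hP1 μs
  obtain ⟨x₀, hx₀⟩ := exists_piDist_pos hP hα0.le hα1 hν0 hν1
  have hell : ellVal g P α (piDist P α μs ν) Φ rstar 0 ≤ (1 + α) * ε / (1 - α) :=
    ellVal_le_of_sub_bellmanT_le hα1 (piDist_nonneg hP hα0.le hα1 hν0) hx₀ le_rfl
      (sub_bellmanT_le hα0.le hP0 hP1 hJstar (phiR Φ rstar))
  have hsplit : (2 / (1 - α)) * ε = ε + (1 + α) * ε / (1 - α) := by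
    field_simp [(sub_pos.mpr hα1).ne']
    ring
  rw [hU 0, hsplit, mul_zero, zero_div, add_zero]
  exact add_le_add_right hell ε

/-- Corollary 1(i): U_SALP(0) ≤ (2/(1-α)) ‖J* - Φr*‖_∞, where
U_SALP(θ) = ‖J* - Φr*‖_∞ + ℓ(r*,θ) + 2θ/(1-α). -/
theorem U_SALP_at_zero_bound
    {X A : Type*} [Fintype X] [Nonempty X] [Fintype A] [Nonempty A] [DecidableEq X] {K : ℕ}
    (g : X → A → ℝ) (P : A → X → X → ℝ) (α : ℝ)
    (hα0 : 0 < α) (hα1 : α < 1)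
    (hP0 : ∀ a x x', 0 ≤ P a x x') (hP1 : ∀ a x, ∑ x', P a x x' = 1)
    (Jstar : X → ℝ) (hJstar : bellmanT g P α Jstar = Jstar)
    (μs : X → A) (hμs : polT g P α μs Jstar = bellmanT g P α Jstar)
    (ν : X → ℝ) (hν0 : ∀ x, 0 ≤ ν x) (hν1 : ∑ x, ν x = 1)
    (Φ : X → Fin K → ℝ)
    (rstar : Fin K → ℝ)
    (hrstar : ∀ r : Fin K → ℝ,
      supNorm (fun x => Jstar x - phiR Φ rstar x) ≤ supNorm (fun x => Jstar x - phiR Φ r x))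
    (U : ℝ → ℝ)
    (hU : ∀ θ, U θ = supNorm (fun x => Jstar x - phiR Φ rstar x) +
      ellVal g P α (piDist P α μs ν) Φ rstar θ + 2 * θ / (1 - α)) :
    U 0 ≤ (2 / (1 - α)) * supNorm (fun x => Jstar x - phiR Φ rstar x) :=
  U_SALP_at_zero_bound_general g P α hα0 hα1 hP0 hP1 Jstar hJstar μs ν hν0 hν1 Φ rstar U hU
end
end

section
/- If r_ALP is an optimal solution to the approximate linear program (maximize ν^⊤Φr subject to Φr ≤ TΦr), then ||J* − Φ r_ALP||_{1,ν} ≤ (2/(1−α)) · min_{r∈ℝ^K} ||J* − Φr||_∞. -/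
open Finset Matrix

noncomputable section

/-!
A function satisfying `J ≤ T J` lies below `J*`: if `d = max (J - J*)`, then monotonicity of `T`
and `T (J + d) = T J + α d` give `J ≤ T (J* + d) = J* + α d`, so `d ≤ α d` and `d ≤ 0`.
Hence the ALP objective `ν^⊤ Φ r` is maximised at the feasible point closest to `J*` in
`‖·‖_{1,ν}`, and `‖J* - Φ r_ALP‖_{1,ν} = ν^⊤ J* - ν^⊤ Φ r_ALP`. Given any `r` with
`‖J* - Φ r‖_∞ = ε`, shifting `Φ r` down by `(1 + α) ε / (1 - α)` (possible because `𝟙` lies in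
the span of `Φ`) yields a feasible point, and comparing it with `r_ALP` gives the error bound
`ε + (1 + α) ε / (1 - α) = 2 ε / (1 - α)`.
-/

section Bellman

variable {X A : Type*} [Fintype X] [Fintype A] [Nonempty A]
  {g : X → A → ℝ} {P : A → X → X → ℝ} {α : ℝ}

theorem bellmanT_mono (hα0 : 0 ≤ α) (hP0 : ∀ a x x', 0 ≤ P a x x') :
    Monotone (bellmanT g P α : (X → ℝ) → X → ℝ) := fun J J' h x =>
  Finset.inf'_mono_fun fun a _ => by
    gcongr with x'
    exacts [hP0 a x x', h x']

theorem bellmanT_add_const (hP1 : ∀ a x, ∑ x', P a x x' = 1) (J : X → ℝ) (c : ℝ) :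
    bellmanT g P α (fun y => J y + c) = fun x => bellmanT g P α J x + α * c := by
  funext x
  have hrow : ∀ a, g x a + α * ∑ x', P a x x' * (J x' + c) =
      g x a + α * ∑ x', P a x x' * J x' + α * c := fun a => by
    simp only [mul_add, Finset.sum_add_distrib, ← Finset.sum_mul, hP1 a x]
    ring
  simp only [bellmanT, hrow]
  exact (Finset.apply_inf'_eq_inf'_comp _ (· + α * c)
    fun a b => (min_add_add_right a b _).symm).symm

theorem le_fixedPoint_of_le_bellmanT [Nonempty X] (hα0 : 0 ≤ α) (hα1 : α < 1)
    (hP0 : ∀ a x x', 0 ≤ P a x x') (hP1 : ∀ a x, ∑ x', P a x x' = 1)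
    {Jstar J : X → ℝ} (hJstar : bellmanT g P α Jstar = Jstar) (hJ : J ≤ bellmanT g P α J) :
    J ≤ Jstar := by
  obtain ⟨x₀, -, hx₀⟩ := Finset.exists_max_image Finset.univ (fun x => J x - Jstar x)
    Finset.univ_nonempty
  set d := J x₀ - Jstar x₀
  have hJd : J ≤ fun y => Jstar y + d := fun y => by
    have := hx₀ y (Finset.mem_univ y)
    linarith
  have hcontract : J ≤ fun y => Jstar y + α * d := by
    calc J ≤ bellmanT g P α J := hJ
      _ ≤ bellmanT g P α (fun y => Jstar y + d) := bellmanT_mono hα0 hP0 hJd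
      _ = fun y => Jstar y + α * d := by rw [bellmanT_add_const hP1, hJstar]
  have hd : d ≤ 0 := by nlinarith [hcontract x₀]
  intro y
  linarith [hJd y]

theorem sub_const_le_bellmanT (hα0 : 0 ≤ α) (hP0 : ∀ a x x', 0 ≤ P a x x')
    (hP1 : ∀ a x, ∑ x', P a x x' = 1) {Jstar J : X → ℝ}
    (hJstar : bellmanT g P α Jstar = Jstar) {ε c : ℝ} (hJ : ∀ x, |J x - Jstar x| ≤ ε)
    (hc : (1 + α) * ε ≤ (1 - α) * c) :
    (fun x => J x - c) ≤ bellmanT g P α (fun x => J x - c) := by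
  have hlower : (fun y => Jstar y + -ε) ≤ J := fun y => by linarith [(abs_le.mp (hJ y)).1]
  have hT : (fun y => Jstar y + α * -ε) ≤ bellmanT g P α J := by
    rw [← hJstar, ← bellmanT_add_const hP1]
    exact bellmanT_mono hα0 hP0 hlower
  intro x
  simp only [sub_eq_add_neg, bellmanT_add_const hP1]
  linarith [hT x, (abs_le.mp (hJ x)).2]

end Bellman

theorem phiR_sub_smul {X : Type*} {K : ℕ} {Φ : X → Fin K → ℝ} {r₁ : Fin K → ℝ}
    (h₁ : ∀ x, phiR Φ r₁ x = 1) (r : Fin K → ℝ) (c : ℝ) (x : X) :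
    phiR Φ (r - c • r₁) x = phiR Φ r x - c := by
  have := h₁ x
  simp only [phiR, Pi.sub_apply, Pi.smul_apply, smul_eq_mul] at this ⊢
  simp only [mul_sub, Finset.sum_sub_distrib, mul_left_comm _ c, ← Finset.mul_sum, this, mul_one]

section Weighted

variable {X : Type*} [Fintype X] {ν : X → ℝ}

theorem sum_mul_sub_const (hν1 : ∑ x, ν x = 1) (f : X → ℝ) (c : ℝ) :
    ∑ x, ν x * (f x - c) = ∑ x, ν x * f x - c := by
  simp only [mul_sub, Finset.sum_sub_distrib, ← Finset.sum_mul, hν1, one_mul]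

theorem sum_mul_le_of_le (hν0 : ∀ x, 0 ≤ ν x) (hν1 : ∑ x, ν x = 1) {f : X → ℝ} {c : ℝ}
    (hf : ∀ x, f x ≤ c) : ∑ x, ν x * f x ≤ c :=
  calc ∑ x, ν x * f x ≤ ∑ x, ν x * c :=
        Finset.sum_le_sum fun x _ => mul_le_mul_of_nonneg_left (hf x) (hν0 x)
    _ = c := by rw [← Finset.sum_mul, hν1, one_mul]

theorem wnorm1_eq_sum_of_nonneg {f : X → ℝ} (hf : 0 ≤ f) :
    wnorm1 ν f = ∑ x, ν x * f x :=
  Finset.sum_congr rfl fun x _ => by rw [abs_of_nonneg (hf x)]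

theorem abs_le_supNorm [Nonempty X] (f : X → ℝ) (x : X) : |f x| ≤ supNorm f :=
  Finset.le_sup' (fun x => |f x|) (Finset.mem_univ x)

end Weighted

section ALP

variable {X A : Type*} [Fintype X] [Nonempty X] [Fintype A] [Nonempty A] {K : ℕ}
  {g : X → A → ℝ} {P : A → X → X → ℝ} {α : ℝ} {Jstar : X → ℝ} {ν : X → ℝ}
  {Φ : X → Fin K → ℝ} {r₁ rALP : Fin K → ℝ}

theorem wnorm1_sub_alp_le_supNorm (hα0 : 0 ≤ α) (hα1 : α < 1)
    (hP0 : ∀ a x x', 0 ≤ P a x x') (hP1 : ∀ a x, ∑ x', P a x x' = 1)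
    (hJstar : bellmanT g P α Jstar = Jstar) (hν0 : ∀ x, 0 ≤ ν x) (hν1 : ∑ x, ν x = 1)
    (hr₁ : ∀ x, phiR Φ r₁ x = 1)
    (hfeas : phiR Φ rALP ≤ bellmanT g P α (phiR Φ rALP))
    (hopt : ∀ r : Fin K → ℝ, (∀ x, phiR Φ r x ≤ bellmanT g P α (phiR Φ r) x) →
      ∑ x, ν x * phiR Φ r x ≤ ∑ x, ν x * phiR Φ rALP x) (r : Fin K → ℝ) :
    wnorm1 ν (fun x => Jstar x - phiR Φ rALP x) ≤
      2 / (1 - α) * supNorm (fun x => Jstar x - phiR Φ r x) := by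
  set ε := supNorm (fun x => Jstar x - phiR Φ r x)
  set c := (1 + α) * ε / (1 - α)
  have h1α : 0 < 1 - α := by linarith
  have hε : ∀ x, |phiR Φ r x - Jstar x| ≤ ε := fun x => by
    rw [abs_sub_comm]
    exact abs_le_supNorm (fun x => Jstar x - phiR Φ r x) x
  have hshift_feas : phiR Φ (r - c • r₁) ≤ bellmanT g P α (phiR Φ (r - c • r₁)) := by
    rw [funext (phiR_sub_smul hr₁ r c)]
    exact sub_const_le_bellmanT hα0 hP0 hP1 hJstar hε (by rw [mul_div_cancel₀ _ h1α.ne'])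
  have hshift_le : ∑ x, ν x * phiR Φ r x - c ≤ ∑ x, ν x * phiR Φ rALP x := by
    simpa only [phiR_sub_smul hr₁, sum_mul_sub_const hν1] using hopt _ hshift_feas
  have hr_err : ∑ x, ν x * (Jstar x - phiR Φ r x) ≤ ε :=
    sum_mul_le_of_le hν0 hν1 fun x => by linarith [(abs_le.mp (hε x)).1]
  have hALP_le : phiR Φ rALP ≤ Jstar :=
    le_fixedPoint_of_le_bellmanT hα0 hα1 hP0 hP1 hJstar hfeas
  rw [wnorm1_eq_sum_of_nonneg fun x => sub_nonneg.mpr (hALP_le x)]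
  simp only [mul_sub, Finset.sum_sub_distrib] at hr_err ⊢
  calc ∑ x, ν x * Jstar x - ∑ x, ν x * phiR Φ rALP x ≤ ε + c := by linarith
    _ = 2 / (1 - α) * ε := by simp only [c]; field_simp; ring

end ALP

/-- de Farias-Van Roy bound: if r_ALP is optimal for the ALP then
‖J* - Φ r_ALP‖_{1,ν} ≤ (2/(1-α)) min_r ‖J* - Φr‖_∞. -/
theorem alp_approximation_guarantee
    {X A : Type*} [Fintype X] [Nonempty X] [Fintype A] [Nonempty A] {K : ℕ}
    (g : X → A → ℝ) (P : A → X → X → ℝ) (α : ℝ)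
    (hα0 : 0 < α) (hα1 : α < 1)
    (hP0 : ∀ a x x', 0 ≤ P a x x') (hP1 : ∀ a x, ∑ x', P a x x' = 1)
    (Jstar : X → ℝ) (hJstar : bellmanT g P α Jstar = Jstar)
    (ν : X → ℝ) (hν0 : ∀ x, 0 ≤ ν x) (hν1 : ∑ x, ν x = 1)
    (Φ : X → Fin K → ℝ)
    (hone : ∃ r1 : Fin K → ℝ, ∀ x, phiR Φ r1 x = 1)
    (rALP : Fin K → ℝ)
    (hfeas : ∀ x, phiR Φ rALP x ≤ bellmanT g P α (phiR Φ rALP) x)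
    (hopt : ∀ r : Fin K → ℝ, (∀ x, phiR Φ r x ≤ bellmanT g P α (phiR Φ r) x) →
      ∑ x, ν x * phiR Φ r x ≤ ∑ x, ν x * phiR Φ rALP x) :
    wnorm1 ν (fun x => Jstar x - phiR Φ rALP x) ≤
      (2 / (1 - α)) * ⨅ r : Fin K → ℝ, supNorm (fun x => Jstar x - phiR Φ r x) := by
  obtain ⟨r₁, hr₁⟩ := hone
  rw [Real.mul_iInf_of_nonneg (div_nonneg zero_le_two (sub_nonneg.mpr hα1.le))]
  exact le_ciInf (wnorm1_sub_alp_le_supNorm hα0.le hα1 hP0 hP1 hJstar hν0 hν1 hr₁ hfeas hopt)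
end
end
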